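/- arXiv:1205.6243 — 2 statements merged into one kernel-verified Lean document; each statement's English description precedes it below -/
import Mathlib

section
/- There exists a constant C > 0 such that for every smooth function f : [0,∞) × ℝ → ℝ with compact support (no boundary condition imposed on {0} × ℝ) one has ‖f‖_{L^∞([0,∞)×ℝ)}² ≤ C · ‖f‖_{L²([0,∞)×ℝ)} · ‖Df‖_{L^∞([0,∞)×ℝ)}. -/
/-!
Let `L` bound `‖Df‖` on the half-plane and let `m = |f x₀|`. The square with lower-left corner
`x₀` and side `a = m / (4L)` lies in the half-plane whatever `x₀` is, which is why no boundary
condition is needed, and it has diameter at most `2a`. By the mean value inequality `|f| ≥ m / 2`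
on it, so `∫ f² ≥ (m / 2)² a² = (m² / (8L))²`, i.e. `m² ≤ 8 ‖f‖_{L²} L`. The degenerate bound
`L = 0` is reached by letting a positive bound decrease to `L`.
-/

noncomputable section

open MeasureTheory

/-- The closed right half-plane `[0,∞) × ℝ` inside `ℝ²`. -/
def halfPlane : Set (EuclideanSpace ℝ (Fin 2)) := {x | 0 ≤ x 0}

open Set Filter Topology

lemma DifferentiableAt.fderiv_eq_zero_of_eventuallyEq_zero {𝕜 E F : Type*}
    [NontriviallyNormedField 𝕜] [NormedAddCommGroup E] [NormedSpace 𝕜 E]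
    [NormedAddCommGroup F] [NormedSpace 𝕜 F]
    {f : E → F} {s : Set E} {x : E} (hf : DifferentiableAt 𝕜 f x) (hs : UniqueDiffWithinAt 𝕜 s x)
    (hx : x ∈ s) (h : f =ᶠ[𝓝[s] x] 0) : fderiv 𝕜 f x = 0 := by
  rw [← hf.fderivWithin hs, h.fderivWithin_eq_of_mem hx, fderivWithin_zero, Pi.zero_apply]

lemma IsCompact.bddAbove_image_of_forall_sdiff_eq_zero {X : Type*} [TopologicalSpace X]
    {g : X → ℝ} {s K : Set X} (hK : IsCompact K) (hg : ContinuousOn g K)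
    (h0 : ∀ x ∈ s \ K, g x = 0) : BddAbove (g '' s) := by
  refine ((hK.bddAbove_image hg).union (bddAbove_singleton (a := 0))).mono ?_
  rintro _ ⟨x, hx, rfl⟩
  by_cases hxK : x ∈ K
  · exact Or.inl (mem_image_of_mem g hxK)
  · exact Or.inr (h0 x ⟨hx, hxK⟩)

lemma le_ciSup₂_of_bddAbove_image {α β : Type*} [ConditionallyCompleteLattice β] {g : α → β}
    {s : Set α} (hg : BddAbove (g '' s)) {x : α} (hx : x ∈ s) : g x ≤ ⨆ y ∈ s, g y :=
  le_ciSup₂ (f := fun y (_ : y ∈ s) => g y)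
    (hg.mono <| iUnion_subset fun _ => range_subset_iff.2 (mem_image_of_mem g)) x hx

lemma sq_biSup_le {α : Type*} {g : α → ℝ} {s : Set α} {R : ℝ} (hR : 0 ≤ R)
    (hg : ∀ x ∈ s, 0 ≤ g x) (h : ∀ x ∈ s, g x ^ 2 ≤ R) : (⨆ x ∈ s, g x) ^ 2 ≤ R := by
  have hle : ⨆ x ∈ s, g x ≤ √R := Real.iSup_le (fun x => Real.iSup_le
    (fun hx => Real.le_sqrt_of_sq_le (h x hx)) (Real.sqrt_nonneg R)) (Real.sqrt_nonneg R)
  have hnonneg : 0 ≤ ⨆ x ∈ s, g x := Real.iSup_nonneg fun x => Real.iSup_nonneg (hg x)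
  exact (pow_le_pow_left₀ hnonneg hle 2).trans_eq (Real.sq_sqrt hR)

theorem Convex.sq_mul_measureReal_le_setIntegral_sq {E : Type*} [NormedAddCommGroup E]
    [NormedSpace ℝ E] [MeasurableSpace E] {μ : Measure E} {f : E → ℝ} {s t : Set E} {x₀ : E}
    {L r : ℝ} (hs : Convex ℝ s) (hf : ∀ x ∈ s, DifferentiableAt ℝ f x)
    (hDf : ∀ x ∈ s, ‖fderiv ℝ f x‖ ≤ L) (hx₀ : x₀ ∈ s) (hts : t ⊆ s) (ht : MeasurableSet t)
    (hμt : μ t ≠ ⊤) (htr : ∀ y ∈ t, dist y x₀ ≤ r) (hLr : L * r ≤ |f x₀|)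
    (hint : IntegrableOn (fun x => f x ^ 2) t μ) :
    (|f x₀| - L * r) ^ 2 * μ.real t ≤ ∫ x in t, f x ^ 2 ∂μ := by
  refine setIntegral_ge_of_const_le_real ht hμt (fun y hy => ?_) hint
  have hL : 0 ≤ L := (norm_nonneg _).trans (hDf x₀ hx₀)
  have hclose : |f x₀| - |f y| ≤ L * r := calc
    |f x₀| - |f y| ≤ ‖f y - f x₀‖ := by
      rw [Real.norm_eq_abs, abs_sub_comm]; exact abs_sub_abs_le_abs_sub _ _
    _ ≤ L * ‖y - x₀‖ := hs.norm_image_sub_le_of_norm_fderiv_le hf hDf hx₀ (hts hy)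
    _ ≤ L * r := by rw [← dist_eq_norm]; exact mul_le_mul_of_nonneg_left (htr y hy) hL
  rw [← sq_abs (f y)]
  exact pow_le_pow_left₀ (by linarith) (by linarith) 2

section Cube

variable {ι : Type*}

def cube (x₀ : EuclideanSpace ℝ ι) (a : ℝ) : Set (EuclideanSpace ℝ ι) :=
  {y | ∀ i, y i ∈ Icc (x₀ i) (x₀ i + a)}

lemma cube_eq_preimage (x₀ : EuclideanSpace ℝ ι) (a : ℝ) :
    cube x₀ a =
      (MeasurableEquiv.toLp 2 (ι → ℝ)).symm ⁻¹' univ.pi fun i => Icc (x₀ i) (x₀ i + a) := by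
  ext y
  simp [cube, Pi.le_def, forall_and]

variable [Fintype ι]

lemma measurableSet_cube (x₀ : EuclideanSpace ℝ ι) (a : ℝ) : MeasurableSet (cube x₀ a) := by
  rw [cube_eq_preimage]
  exact (MeasurableSet.univ_pi fun _ => measurableSet_Icc).preimage (MeasurableEquiv.measurable _)

lemma volume_cube (x₀ : EuclideanSpace ℝ ι) {a : ℝ} (ha : 0 ≤ a) :
    volume (cube x₀ a) = ENNReal.ofReal (a ^ Fintype.card ι) := by
  rw [cube_eq_preimage,
    (EuclideanSpace.volume_preserving_symm_measurableEquiv_toLp ι).measure_preimage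
      (MeasurableSet.univ_pi fun _ => measurableSet_Icc).nullMeasurableSet, volume_pi_pi]
  simp [ENNReal.ofReal_pow ha]

lemma dist_le_of_mem_cube {x₀ y : EuclideanSpace ℝ ι} {a : ℝ} (ha : 0 ≤ a) (hy : y ∈ cube x₀ a) :
    dist y x₀ ≤ √(Fintype.card ι) * a := by
  have hcoord : ∀ i, dist (y i) (x₀ i) ^ 2 ≤ a ^ 2 := fun i => by
    obtain ⟨h₁, h₂⟩ := hy i
    rw [Real.dist_eq, sq_abs]
    nlinarith
  calc dist y x₀ = √(∑ i, dist (y i) (x₀ i) ^ 2) := EuclideanSpace.dist_eq y x₀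
    _ ≤ √(Fintype.card ι * a ^ 2) := by
      gcongr
      exact (Finset.sum_le_sum fun i _ => hcoord i).trans_eq (by simp)
    _ = √(Fintype.card ι) * a := by rw [Real.sqrt_mul (Nat.cast_nonneg _), Real.sqrt_sq ha]

end Cube

lemma isClosed_halfPlane : IsClosed halfPlane := isClosed_le continuous_const (by fun_prop)

lemma convex_halfPlane : Convex ℝ halfPlane :=
  convex_halfSpace_ge (EuclideanSpace.proj (0 : Fin 2)).isLinear 0

lemma uniqueDiffOn_halfPlane : UniqueDiffOn ℝ halfPlane := by
  refine uniqueDiffOn_convex convex_halfPlane ⟨EuclideanSpace.single 0 1, ?_⟩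
  have hopen : IsOpen {x : EuclideanSpace ℝ (Fin 2) | 0 < x 0} :=
    isOpen_lt continuous_const (by fun_prop)
  exact mem_interior_iff_mem_nhds.2 <|
    Filter.mem_of_superset (hopen.mem_nhds (by simp)) fun _ hx => le_of_lt (α := ℝ) hx

lemma cube_subset_halfPlane {x₀ : EuclideanSpace ℝ (Fin 2)} (hx₀ : x₀ ∈ halfPlane) (a : ℝ) :
    cube x₀ a ⊆ halfPlane := fun _ hy => hx₀.trans (hy 0).1

section HalfPlane

variable {f : EuclideanSpace ℝ (Fin 2) → ℝ} {L : ℝ} {x₀ : EuclideanSpace ℝ (Fin 2)}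

lemma sq_abs_le_of_norm_fderiv_le_of_pos (hf : ∀ x ∈ halfPlane, DifferentiableAt ℝ f x)
    (hint : IntegrableOn (fun x => f x ^ 2) halfPlane) (hL : 0 < L)
    (hDf : ∀ x ∈ halfPlane, ‖fderiv ℝ f x‖ ≤ L) (hx₀ : x₀ ∈ halfPlane) :
    |f x₀| ^ 2 ≤ 8 * √(∫ x in halfPlane, f x ^ 2) * L := by
  set m := |f x₀|
  set a := m / (4 * L) with ha_def
  have ha : 0 ≤ a := by positivity
  have hcube := cube_subset_halfPlane hx₀ a
  have hdist : ∀ y ∈ cube x₀ a, dist y x₀ ≤ 2 * a := fun y hy =>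
    (dist_le_of_mem_cube ha hy).trans <| by
      gcongr
      simp only [Fintype.card_fin, Nat.cast_ofNat]
      exact Real.sqrt_le_iff.2 ⟨zero_le_two, by norm_num⟩
  have hLa : L * (2 * a) = m / 2 := by rw [ha_def]; field_simp; ring
  have hvol : volume.real (cube x₀ a) = a ^ 2 := by
    simp [measureReal_def, volume_cube x₀ ha, ENNReal.toReal_ofReal, ha]
  have hQ := convex_halfPlane.sq_mul_measureReal_le_setIntegral_sq hf hDf hx₀ hcube
    (measurableSet_cube x₀ a) (by simp [volume_cube x₀ ha]) hdist
    (by rw [hLa]; linarith [abs_nonneg (f x₀)]) (hint.mono_set hcube)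
  have hIQ : ∫ x in cube x₀ a, f x ^ 2 ≤ ∫ x in halfPlane, f x ^ 2 :=
    setIntegral_mono_set hint (ae_of_all _ fun _ => sq_nonneg _) (ae_of_all _ hcube)
  have hsq : (m ^ 2 / (8 * L)) ^ 2 ≤ ∫ x in halfPlane, f x ^ 2 := calc
    (m ^ 2 / (8 * L)) ^ 2 = (m - L * (2 * a)) ^ 2 * volume.real (cube x₀ a) := by
      rw [hvol, hLa, ha_def]; field_simp; ring
    _ ≤ _ := hQ.trans hIQ
  have hm := (div_le_iff₀ (by positivity)).1 (Real.le_sqrt_of_sq_le hsq)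
  linarith

lemma sq_abs_le_of_norm_fderiv_le (hf : ∀ x ∈ halfPlane, DifferentiableAt ℝ f x)
    (hint : IntegrableOn (fun x => f x ^ 2) halfPlane)
    (hDf : ∀ x ∈ halfPlane, ‖fderiv ℝ f x‖ ≤ L) (hx₀ : x₀ ∈ halfPlane) :
    |f x₀| ^ 2 ≤ 8 * √(∫ x in halfPlane, f x ^ 2) * L := by
  have hL : 0 ≤ L := (norm_nonneg _).trans (hDf x₀ hx₀)
  have hlim : Tendsto (fun L' => 8 * √(∫ x in halfPlane, f x ^ 2) * L') (𝓝[>] L)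
      (𝓝 (8 * √(∫ x in halfPlane, f x ^ 2) * L)) :=
    ((continuous_const.mul continuous_id).tendsto L).mono_left nhdsWithin_le_nhds
  refine ge_of_tendsto hlim (eventually_nhdsWithin_of_forall fun L' (hL' : L < L') => ?_)
  exact sq_abs_le_of_norm_fderiv_le_of_pos hf hint (hL.trans_lt hL')
    (fun x hx => (hDf x hx).trans hL'.le) hx₀

end HalfPlane

/-- Interpolation inequality on the half-plane `[0,∞) × ℝ` (no boundary condition):
there is a constant `C > 0` such that `‖f‖_∞² ≤ C ‖f‖_{L²} ‖Df‖_∞`, all norms taken over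
the half-plane, for every `f` which is the restriction of a smooth function on `ℝ²`
whose support intersected with the half-plane is compact. -/
theorem sobolev_interpolation_half_plane :
    ∃ C : ℝ, 0 < C ∧ ∀ f : EuclideanSpace ℝ (Fin 2) → ℝ,
      ContDiff ℝ (⊤ : ℕ∞) f →
      IsCompact (closure {x ∈ halfPlane | f x ≠ 0}) →
      (⨆ x ∈ halfPlane, |f x|) ^ 2 ≤
        C * Real.sqrt (∫ x in halfPlane, (f x) ^ 2) * (⨆ x ∈ halfPlane, ‖fderiv ℝ f x‖) := by
  refine ⟨8, by norm_num, fun f hf hK => ?_⟩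
  set K := closure {x ∈ halfPlane | f x ≠ 0}
  have hfK : ∀ x ∈ halfPlane \ K, f x = 0 := fun x hx =>
    not_not.1 fun h => hx.2 (subset_closure ⟨hx.1, h⟩)
  have hdiff : Differentiable ℝ f := hf.differentiable (by simp)
  have hDfK : ∀ x ∈ halfPlane \ K, fderiv ℝ f x = 0 := fun x hx =>
    (hdiff x).fderiv_eq_zero_of_eventuallyEq_zero (uniqueDiffOn_halfPlane x hx.1) hx.1 <|
      eventually_nhdsWithin_iff.2 <| (isClosed_closure.isOpen_compl.eventually_mem hx.2).mono
        fun y hyK hy => hfK y ⟨hy, hyK⟩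
  have hint : IntegrableOn (fun x => f x ^ 2) halfPlane :=
    ((hf.continuous.pow 2).continuousOn.integrableOn_compact hK).of_forall_sdiff_eq_zero
      isClosed_halfPlane.measurableSet fun x hx => by simp [hfK x hx]
  have hDf : ∀ x ∈ halfPlane, ‖fderiv ℝ f x‖ ≤ ⨆ y ∈ halfPlane, ‖fderiv ℝ f y‖ := fun x hx =>
    le_ciSup₂_of_bddAbove_image (hK.bddAbove_image_of_forall_sdiff_eq_zero
      (hf.continuous_fderiv (by simp)).norm.continuousOn fun y hy => by simp [hDfK y hy]) hx
  have hbound : ∀ x ∈ halfPlane, |f x| ^ 2 ≤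
      8 * √(∫ x in halfPlane, f x ^ 2) * ⨆ y ∈ halfPlane, ‖fderiv ℝ f y‖ := fun x hx =>
    sq_abs_le_of_norm_fderiv_le (fun y _ => hdiff y) hint hDf hx
  exact sq_biSup_le ((sq_nonneg _).trans (hbound 0 (by simp [halfPlane])))
    (fun x _ => abs_nonneg (f x)) hbound
end
end

section
/- Let H : ℝ × ℝ² → ℝ be C^∞ with H(t+1, ·) = H(t, ·) for all t, let X_{H^t} = i∇H^t be the associated Hamiltonian vector field, assumed tangent to ∂D for every t, and let φ_H^t : D → D denote the generated flow with φ_H^0 = id. Let B ≥ 0 be a constant with |X_{H^t}(ξ) − X_{H^t}(η)| ≤ B|ξ − η| for all t ∈ ℝ and ξ, η ∈ D. Fix an integer n ≥ 1 and A ≥ 0, and let p ∈ D. Suppose there exists a C¹ map z : [0,∞) × ℝ/nℤ → D satisfying the Floer equation ∂_s z + i(∂_t z − X_{H^t}(z)) = 0, with sup_{(s,t)} |∂_s z(s,t)| ≤ A, and with z(s₀, 0) = p for some s₀ ≥ 0. Then |φ_H^n(p) − p| ≤ A·n·e^{Bn}. -/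
noncomputable section

open MeasureTheory Filter Real Set

/-- The closed unit disk `D ⊆ ℂ ≅ ℝ²`. -/
def unitDisk : Set ℂ := Metric.closedBall 0 1

/-- The Hamiltonian vector field `X_{H^t} = i∇H^t` on `ℂ ≅ ℝ²` (characterized by
`ω₀(X_{H^t}, ·) = −dH^t`). -/
def hamVF (H : ℝ → ℂ → ℝ) (t : ℝ) (ξ : ℂ) : ℂ :=
  Complex.I * ⟨(fderiv ℝ (H t) ξ) 1, (fderiv ℝ (H t) ξ) Complex.I⟩

/-!
Along the loop `t ↦ z(s₀, t)` the Floer equation says `∂ₜz − X_{H^t}(z) = i ∂ₛz`, so this loop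
is an `A`-approximate trajectory of `X_H` starting at `p`. Grönwall's inequality compares it
with the true trajectory `t ↦ φ_H^t(p)`: after time `n` they are at most `A n e^{Bn}` apart,
and by `n`-periodicity the loop is back at `p` at time `n`.
-/

theorem Real.exp_sub_one_le_mul_exp (y : ℝ) : exp y - 1 ≤ y * exp y := by
  have h : 1 - y ≤ exp (-y) := by linarith [add_one_le_exp (-y)]
  have hmul := mul_le_mul_of_nonneg_right h (exp_pos y).le
  rw [← exp_add, neg_add_cancel, exp_zero] at hmul
  linarith

theorem gronwallBound_zero_le {K ε : ℝ} (hK : 0 ≤ K) (hε : 0 ≤ ε) (x : ℝ) :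
    gronwallBound 0 K ε x ≤ ε * x * exp (K * x) := by
  rcases hK.eq_or_lt with rfl | hKpos
  · simp [gronwallBound_K0]
  · rw [gronwallBound_of_K_ne_0 hKpos.ne']
    calc 0 * exp (K * x) + ε / K * (exp (K * x) - 1)
        ≤ ε / K * (K * x * exp (K * x)) := by
          rw [zero_mul, zero_add]
          exact mul_le_mul_of_nonneg_left (exp_sub_one_le_mul_exp _) (by positivity)
      _ = ε * x * exp (K * x) := by field_simp

theorem dist_le_of_approx_trajectory_of_mem {E : Type*} [NormedAddCommGroup E]
    [NormedSpace ℝ E] {v : ℝ → E → E} {S : Set E} {K : NNReal} {f f' g : ℝ → E} {ε T : ℝ}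
    (hv : ∀ t ∈ Ico 0 T, LipschitzOnWith K (v t) S)
    (hf : ∀ t ∈ Icc 0 T, HasDerivAt f (f' t) t)
    (hf_bound : ∀ t ∈ Ico 0 T, dist (f' t) (v t (f t)) ≤ ε)
    (hfS : ∀ t ∈ Ico 0 T, f t ∈ S)
    (hg : ∀ t ∈ Icc 0 T, HasDerivAt g (v t (g t)) t)
    (hgS : ∀ t ∈ Ico 0 T, g t ∈ S)
    (h0 : f 0 = g 0) (hε : 0 ≤ ε) (hT : 0 ≤ T) :
    dist (f T) (g T) ≤ ε * T * exp (K * T) := by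
  have hgronwall := dist_le_of_approx_trajectories_ODE_of_mem (s := fun _ => S) (δ := 0)
    hv (fun t ht => (hf t ht).continuousAt.continuousWithinAt)
    (fun t ht => (hf t (Ico_subset_Icc_self ht)).hasDerivWithinAt) hf_bound hfS
    (fun t ht => (hg t ht).continuousAt.continuousWithinAt)
    (fun t ht => (hg t (Ico_subset_Icc_self ht)).hasDerivWithinAt)
    (fun t _ => (dist_self _).le) hgS (by rw [h0, dist_self]) T ⟨hT, le_rfl⟩
  rw [add_zero, sub_zero] at hgronwall
  exact hgronwall.trans (gronwallBound_zero_le K.coe_nonneg hε T)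

theorem hasDerivAt_fderiv_apply_prodMk_right {E : Type*} [NormedAddCommGroup E]
    [NormedSpace ℝ E] {z : ℝ × ℝ → E} (hz : Differentiable ℝ z) (s t : ℝ) :
    HasDerivAt (fun τ => z (s, τ)) (fderiv ℝ z (s, t) (0, 1)) t :=
  (hz (s, t)).hasFDerivAt.comp_hasDerivAt t ((hasDerivAt_const t s).prodMk (hasDerivAt_id t))

theorem dist_eq_norm_of_add_I_mul_sub_eq_zero {a b c : ℂ}
    (h : a + Complex.I * (b - c) = 0) : dist b c = ‖a‖ := by
  have hbc : b - c = Complex.I * a := by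
    linear_combination (-Complex.I) * h + (b - c) * Complex.I_mul_I
  rw [dist_eq_norm, hbc, norm_mul, Complex.norm_I, one_mul]

theorem floer_trajectory_estimate_general
    (H : ℝ → ℂ → ℝ)
    (Φ : ℝ → ℂ → ℂ)
    (hΦ0 : ∀ ξ, Φ 0 ξ = ξ)
    (hΦode : ∀ ξ ∈ unitDisk, ∀ t : ℝ, HasDerivAt (fun τ => Φ τ ξ) (hamVF H t (Φ t ξ)) t)
    (hΦmaps : ∀ t : ℝ, Set.MapsTo (Φ t) unitDisk unitDisk)
    (B : ℝ) (hB : 0 ≤ B)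
    (hlip : ∀ t : ℝ, ∀ ξ ∈ unitDisk, ∀ η ∈ unitDisk,
      ‖hamVF H t ξ - hamVF H t η‖ ≤ B * ‖ξ - η‖)
    (n : ℕ) (A : ℝ) (hA : 0 ≤ A)
    (p : ℂ) (hp : p ∈ unitDisk)
    (z : ℝ × ℝ → ℂ)
    (hzC1 : ContDiff ℝ 1 z)
    (hzper : ∀ s t : ℝ, z (s, t + n) = z (s, t))
    (hzD : ∀ s t : ℝ, 0 ≤ s → z (s, t) ∈ unitDisk)
    (hzFloer : ∀ s t : ℝ, 0 ≤ s →
      fderiv ℝ z (s, t) (1, 0)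
        + Complex.I * (fderiv ℝ z (s, t) (0, 1) - hamVF H t (z (s, t))) = 0)
    (hzbound : ∀ s t : ℝ, 0 ≤ s → ‖fderiv ℝ z (s, t) (1, 0)‖ ≤ A)
    (s₀ : ℝ) (hs₀ : 0 ≤ s₀) (hzp : z (s₀, 0) = p) :
    ‖Φ (n : ℝ) p - p‖ ≤ A * n * Real.exp (B * n) := by
  have hlipschitz : ∀ t, LipschitzOnWith B.toNNReal (hamVF H t) unitDisk := fun t =>
    LipschitzOnWith.of_dist_le_mul fun ξ hξ η hη => by
      simpa only [dist_eq_norm, Real.coe_toNNReal B hB] using hlip t ξ hξ η hη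
  have happrox : ∀ t, dist (fderiv ℝ z (s₀, t) (0, 1)) (hamVF H t (z (s₀, t))) ≤ A := fun t =>
    (dist_eq_norm_of_add_I_mul_sub_eq_zero (hzFloer s₀ t hs₀)).trans_le (hzbound s₀ t hs₀)
  have hestimate := dist_le_of_approx_trajectory_of_mem (g := fun t => Φ t p)
    (fun t _ => hlipschitz t)
    (fun t _ => hasDerivAt_fderiv_apply_prodMk_right (hzC1.differentiable one_ne_zero) s₀ t)
    (fun t _ => happrox t) (fun t _ => hzD s₀ t hs₀) (fun t _ => hΦode p hp t)
    (fun t _ => hΦmaps t hp) (by simp [hzp, hΦ0]) hA n.cast_nonneg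
  have hloop : z (s₀, n) = p := by simpa [hzp] using hzper s₀ 0
  rwa [hloop, Real.coe_toNNReal B hB, dist_comm, dist_eq_norm] at hestimate

/-- If `z : [0,∞) × ℝ/nℤ → D` is a `C¹` solution of the Floer equation
`∂ₛz + i(∂ₜz − X_{H^t}(z)) = 0` with `sup |∂ₛz| ≤ A` passing through `p` at time `t = 0`,
and `X_{H^t}` is `B`-Lipschitz on `D`, then `‖φ_H^n(p) − p‖ ≤ A n e^{Bn}`. -/
theorem floer_trajectory_estimate
    (H : ℝ → ℂ → ℝ)
    (Hsmooth : ContDiff ℝ (⊤ : ℕ∞) (Function.uncurry H))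
    (Hper : ∀ (t : ℝ) (ξ : ℂ), H (t + 1) ξ = H t ξ)
    (Htangent : ∀ (t : ℝ) (ξ : ℂ), ‖ξ‖ = 1 → (hamVF H t ξ * (starRingEnd ℂ) ξ).re = 0)
    (Φ : ℝ → ℂ → ℂ)
    (hΦ0 : ∀ ξ, Φ 0 ξ = ξ)
    (hΦode : ∀ ξ ∈ unitDisk, ∀ t : ℝ, HasDerivAt (fun τ => Φ τ ξ) (hamVF H t (Φ t ξ)) t)
    (hΦmaps : ∀ t : ℝ, Set.MapsTo (Φ t) unitDisk unitDisk)
    (B : ℝ) (hB : 0 ≤ B)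
    (hlip : ∀ t : ℝ, ∀ ξ ∈ unitDisk, ∀ η ∈ unitDisk,
      ‖hamVF H t ξ - hamVF H t η‖ ≤ B * ‖ξ - η‖)
    (n : ℕ) (hn : 1 ≤ n) (A : ℝ) (hA : 0 ≤ A)
    (p : ℂ) (hp : p ∈ unitDisk)
    (z : ℝ × ℝ → ℂ)
    (hzC1 : ContDiff ℝ 1 z)
    (hzper : ∀ s t : ℝ, z (s, t + n) = z (s, t))
    (hzD : ∀ s t : ℝ, 0 ≤ s → z (s, t) ∈ unitDisk)
    (hzFloer : ∀ s t : ℝ, 0 ≤ s →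
      fderiv ℝ z (s, t) (1, 0)
        + Complex.I * (fderiv ℝ z (s, t) (0, 1) - hamVF H t (z (s, t))) = 0)
    (hzbound : ∀ s t : ℝ, 0 ≤ s → ‖fderiv ℝ z (s, t) (1, 0)‖ ≤ A)
    (s₀ : ℝ) (hs₀ : 0 ≤ s₀) (hzp : z (s₀, 0) = p) :
    ‖Φ (n : ℝ) p - p‖ ≤ A * n * Real.exp (B * n) :=
  floer_trajectory_estimate_general H Φ hΦ0 hΦode hΦmaps B hB hlip n A hA p hp z hzC1 hzper hzD
    hzFloer hzbound s₀ hs₀ hzp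
end
end
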